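/- For real numbers a ≥ b ≥ 0 with a² + b² = 1 and a > 0, the 3-form ρ = a·e^{123} + b·e^{456} on Euclidean ℝ⁸ has induced bracket [·,·]_ρ satisfying the Jacobi identity, so (ℝ⁸, [·,·]_ρ, ⟨·,·⟩) is an adapted Lie algebra; moreover this Lie algebra is isomorphic to su(2) ⊕ su(2) ⊕ ℝ² if b > 0, and to su(2) ⊕ ℝ⁵ if b = 0. -/

import Mathlib

noncomputable section

/-- The standard basis vectors of ℝ⁸ (`e i` is `eᵢ₊₁` in the paper's notation). -/
def e (i : Fin 8) : Fin 8 → ℝ := fun j => if i = j then 1 else 0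

/-- The standard inner product on ℝ⁸. -/
def dot (x y : Fin 8 → ℝ) : ℝ := ∑ i, x i * y i

/-- The alternating 3-form `eⁱ ∧ eʲ ∧ eᵏ` on ℝ⁸ (indices in `Fin 8`). -/
def wedge3 (i j k : Fin 8) : AlternatingMap ℝ (Fin 8 → ℝ) ℝ (Fin 3) :=
  (Matrix.detRowAlternating : AlternatingMap ℝ (Fin 3 → ℝ) ℝ (Fin 3)).compLinearMap
    (LinearMap.funLeft ℝ ℝ ![i, j, k])

/-- The PSU(3)-form `ρ₀ = ½e^{123} + ¼e^1∧(e^{47}−e^{56}) + ¼e^2∧(e^{46}+e^{57})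
+ ¼e^3∧(e^{45}−e^{67}) + (√3/4)e^8∧(e^{45}+e^{67})` (indices shifted down by one). -/
def ρ₀ : AlternatingMap ℝ (Fin 8 → ℝ) ℝ (Fin 3) :=
  (1/2 : ℝ) • wedge3 0 1 2
  + (1/4 : ℝ) • (wedge3 0 3 6 - wedge3 0 4 5)
  + (1/4 : ℝ) • (wedge3 1 3 5 + wedge3 1 4 6)
  + (1/4 : ℝ) • (wedge3 2 3 4 - wedge3 2 5 6)
  + (Real.sqrt 3 / 4) • (wedge3 7 3 4 + wedge3 7 5 6)

/-- The bracket `[x,y]_ρ` induced by a 3-form `ρ`, determined by `⟨[x,y]_ρ, z⟩ = ρ(x,y,z)`. -/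
def bracketOf (ρ : AlternatingMap ℝ (Fin 8 → ℝ) ℝ (Fin 3)) (x y : Fin 8 → ℝ) : Fin 8 → ℝ :=
  fun k => ρ ![x, y, e k]
open Matrix

attribute [local instance 100] LieRing.ofAssociativeRing

/-- `su n`: the real Lie algebra of traceless skew-Hermitian complex `n × n` matrices, as a real
Lie subalgebra of the matrix algebra. -/
def su (n : ℕ) : LieSubalgebra ℝ (Matrix (Fin n) (Fin n) ℂ) where
  carrier := {X | Xᴴ = -X ∧ X.trace = 0}
  add_mem' := by
    rintro X Y ⟨h1, h2⟩ ⟨h3, h4⟩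
    refine ⟨?_, ?_⟩
    · rw [Matrix.conjTranspose_add, h1, h3, neg_add]
    · rw [Matrix.trace_add, h2, h4, add_zero]
  zero_mem' := by
    constructor <;> simp
  smul_mem' := by
    rintro c X ⟨h1, h2⟩
    refine ⟨?_, ?_⟩
    · rw [Matrix.conjTranspose_smul, h1, star_trivial, smul_neg]
    · rw [Matrix.trace_smul, h2, smul_zero]
  lie_mem' := by
    rintro X Y ⟨h1, h2⟩ ⟨h3, h4⟩
    refine ⟨?_, ?_⟩
    · rw [Ring.lie_def, Matrix.conjTranspose_sub, Matrix.conjTranspose_mul,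
        Matrix.conjTranspose_mul, h1, h3, neg_mul_neg, neg_mul_neg, neg_sub]
    · rw [Ring.lie_def, Matrix.trace_sub, Matrix.trace_mul_comm, sub_self]

/-!
The bracket of `a e¹²³ + b e⁴⁵⁶` is `a` times the cross product on `span(e₁, e₂, e₃)`, `b` times the
cross product on `span(e₄, e₅, e₆)`, and zero on `e₇, e₈`. Jacobi and skew-adjointness are then
coordinate identities. Since `(ℝ³, ⨯₃)` is isomorphic to `su(2)` through the quaternion units,
rescaling each block by its coefficient turns the bracket into that of `su(2) ⊕ su(2) ⊕ ℝ²`, or of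
`su(2) ⊕ ℝ⁵` when `b = 0`.
-/

open Complex

/-- `w ↦ -½ (w₀ 𝐢 + w₁ 𝐣 + w₂ 𝐤)` in the complex 2 × 2 model of the quaternions; the factor `-½`
makes it carry the cross product to the commutator. -/
def su2Matrix (w : Fin 3 → ℝ) : Matrix (Fin 2) (Fin 2) ℂ :=
  !![-(I * w 2) / 2, -(w 1 + I * w 0) / 2; (w 1 - I * w 0) / 2, I * w 2 / 2]

def su2Coords (X : Matrix (Fin 2) (Fin 2) ℂ) : Fin 3 → ℝ :=
  ![-2 * (X 0 1).im, -2 * (X 0 1).re, -2 * (X 0 0).im]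

lemma su2Matrix_mem (w : Fin 3 → ℝ) : su2Matrix w ∈ su 2 := by
  constructor
  · ext i j
    fin_cases i <;> fin_cases j <;> simp [su2Matrix] <;> ring
  · simp [su2Matrix, Matrix.trace_fin_two]
    ring

lemma su2Matrix_add (u v : Fin 3 → ℝ) : su2Matrix (u + v) = su2Matrix u + su2Matrix v := by
  ext i j
  fin_cases i <;> fin_cases j <;> simp [su2Matrix] <;> ring

lemma su2Matrix_smul (c : ℝ) (w : Fin 3 → ℝ) : su2Matrix (c • w) = c • su2Matrix w := by
  ext i j
  fin_cases i <;> fin_cases j <;> simp [su2Matrix] <;> ring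

lemma su2Matrix_cross (u v : Fin 3 → ℝ) :
    su2Matrix (u ⨯₃ v) = ⁅su2Matrix u, su2Matrix v⁆ := by
  rw [Ring.lie_def]
  ext i j
  fin_cases i <;> fin_cases j <;>
    simp [su2Matrix, cross_apply, Complex.ext_iff] <;> constructor <;> ring

lemma su2Coords_su2Matrix (w : Fin 3 → ℝ) : su2Coords (su2Matrix w) = w := by
  ext i
  fin_cases i <;> simp [su2Coords, su2Matrix] <;> ring

lemma su2Matrix_su2Coords {X : Matrix (Fin 2) (Fin 2) ℂ} (hX : X ∈ su 2) :
    su2Matrix (su2Coords X) = X := by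
  obtain ⟨hH, hT⟩ := hX
  have h00 : star (X 0 0) = -X 0 0 := by simpa using congrFun (congrFun hH 0) 0
  have h10 : star (X 0 1) = -X 1 0 := by simpa using congrFun (congrFun hH 1) 0
  have h11 : X 1 1 = -X 0 0 := by rw [Matrix.trace_fin_two] at hT; linear_combination hT
  have hre : (X 0 0).re = 0 := by have := congrArg Complex.re h00; simp at this; linarith
  have hr : (X 1 0).re = -(X 0 1).re := by have := congrArg Complex.re h10; simp at this; linarith
  have hi : (X 1 0).im = (X 0 1).im := by have := congrArg Complex.im h10; simp at this; linarith
  ext i j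
  fin_cases i <;> fin_cases j <;>
    simp [su2Matrix, su2Coords, Complex.ext_iff, h11, hre, hr, hi] <;> ring

def crossEquivSu2 : (Fin 3 → ℝ) ≃ₗ[ℝ] su 2 where
  toFun w := ⟨su2Matrix w, su2Matrix_mem w⟩
  map_add' u v := Subtype.ext (su2Matrix_add u v)
  map_smul' c w := Subtype.ext (su2Matrix_smul c w)
  invFun X := su2Coords X
  left_inv := su2Coords_su2Matrix
  right_inv X := Subtype.ext (su2Matrix_su2Coords X.2)

lemma crossEquivSu2_cross (u v : Fin 3 → ℝ) :
    crossEquivSu2 (u ⨯₃ v) = ⁅crossEquivSu2 u, crossEquivSu2 v⁆ :=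
  Subtype.ext (su2Matrix_cross u v)

def scaledCrossEquivSu2 (a : ℝ) (ha : a ≠ 0) : (Fin 3 → ℝ) ≃ₗ[ℝ] su 2 :=
  (LinearEquiv.smulOfNeZero ℝ _ a ha).trans crossEquivSu2

lemma scaledCrossEquivSu2_smul_cross (a : ℝ) (ha : a ≠ 0) (u v : Fin 3 → ℝ) :
    scaledCrossEquivSu2 a ha (a • (u ⨯₃ v)) =
      ⁅scaledCrossEquivSu2 a ha u, scaledCrossEquivSu2 a ha v⁆ := by
  simp only [scaledCrossEquivSu2, LinearEquiv.trans_apply, LinearEquiv.smulOfNeZero_apply,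
    ← crossEquivSu2_cross, LinearMap.map_smul, LinearMap.smul_apply]

lemma wedge3_apply (i j k : Fin 8) (x y z : Fin 8 → ℝ) :
    wedge3 i j k ![x, y, z] =
      x i * (y j * z k - y k * z j) - x j * (y i * z k - y k * z i)
        + x k * (y i * z j - y j * z i) := by
  simp only [wedge3, AlternatingMap.compLinearMap_apply]
  rw [show ∀ v : Fin 3 → Fin 3 → ℝ, Matrix.detRowAlternating v = Matrix.det (Matrix.of v)
    from fun _ => rfl]
  simp [Matrix.det_fin_three, LinearMap.funLeft]
  ring

def twoSummandForm (a b : ℝ) : AlternatingMap ℝ (Fin 8 → ℝ) ℝ (Fin 3) :=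
  a • wedge3 0 1 2 + b • wedge3 3 4 5

lemma bracketOf_twoSummandForm (a b : ℝ) (x y : Fin 8 → ℝ) :
    bracketOf (twoSummandForm a b) x y =
      ![a * (x 1 * y 2 - x 2 * y 1), a * (x 2 * y 0 - x 0 * y 2), a * (x 0 * y 1 - x 1 * y 0),
        b * (x 4 * y 5 - x 5 * y 4), b * (x 5 * y 3 - x 3 * y 5), b * (x 3 * y 4 - x 4 * y 3),
        0, 0] := by
  ext k
  fin_cases k <;> simp [bracketOf, twoSummandForm, wedge3_apply, e, -mul_eq_mul_left_iff] <;> ring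

lemma bracketOf_twoSummandForm_jacobi (a b : ℝ) (x y z : Fin 8 → ℝ) :
    bracketOf (twoSummandForm a b) (bracketOf (twoSummandForm a b) x y) z
      + bracketOf (twoSummandForm a b) (bracketOf (twoSummandForm a b) y z) x
      + bracketOf (twoSummandForm a b) (bracketOf (twoSummandForm a b) z x) y = 0 := by
  simp only [bracketOf_twoSummandForm]
  ext k
  fin_cases k <;> simp <;> ring

lemma dot_bracketOf_twoSummandForm (a b : ℝ) (x y z : Fin 8 → ℝ) :
    dot (bracketOf (twoSummandForm a b) x y) z = - dot y (bracketOf (twoSummandForm a b) x z) := by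
  simp only [bracketOf_twoSummandForm, dot, Fin.sum_univ_eight]
  simp
  ring

variable (R M : Type*) [Semiring R] [AddCommMonoid M] [Module R M] in
def finAddProdEquiv (m n : ℕ) : (Fin (m + n) → M) ≃ₗ[R] (Fin m → M) × (Fin n → M) :=
  (LinearEquiv.funCongrLeft R M finSumFinEquiv).trans
    (LinearEquiv.sumArrowLequivProdArrow _ _ R M)

def coords323 : (Fin 8 → ℝ) ≃ₗ[ℝ] (Fin 3 → ℝ) × (Fin 3 → ℝ) × (Fin 2 → ℝ) :=
  (finAddProdEquiv ℝ ℝ 3 5).trans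
    (LinearEquiv.prodCongr (LinearEquiv.refl ℝ _) (finAddProdEquiv ℝ ℝ 3 2))

def coords35 : (Fin 8 → ℝ) ≃ₗ[ℝ] (Fin 3 → ℝ) × (Fin 5 → ℝ) :=
  finAddProdEquiv ℝ ℝ 3 5

lemma coords323_bracketOf_twoSummandForm (a b : ℝ) (x y : Fin 8 → ℝ) :
    coords323 (bracketOf (twoSummandForm a b) x y) =
      (a • ((coords323 x).1 ⨯₃ (coords323 y).1),
        b • ((coords323 x).2.1 ⨯₃ (coords323 y).2.1), 0) := by
  rw [bracketOf_twoSummandForm]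
  refine Prod.ext ?_ (Prod.ext ?_ ?_) <;> ext i <;> fin_cases i <;> rfl

lemma coords35_bracketOf_twoSummandForm_zero (a : ℝ) (x y : Fin 8 → ℝ) :
    coords35 (bracketOf (twoSummandForm a 0) x y) =
      (a • ((coords35 x).1 ⨯₃ (coords35 y).1), 0) := by
  rw [bracketOf_twoSummandForm]
  simp only [zero_mul]
  refine Prod.ext ?_ ?_ <;> ext i <;> fin_cases i <;> rfl

def twoSummandFormEquiv (a b : ℝ) (ha : a ≠ 0) (hb : b ≠ 0) :
    (Fin 8 → ℝ) ≃ₗ[ℝ] su 2 × su 2 × (Fin 2 → ℝ) :=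
  coords323.trans <| (scaledCrossEquivSu2 a ha).prodCongr <|
    (scaledCrossEquivSu2 b hb).prodCongr (LinearEquiv.refl ℝ _)

lemma twoSummandFormEquiv_bracketOf (a b : ℝ) (ha : a ≠ 0) (hb : b ≠ 0) (x y : Fin 8 → ℝ) :
    twoSummandFormEquiv a b ha hb (bracketOf (twoSummandForm a b) x y) =
      (⁅(twoSummandFormEquiv a b ha hb x).1, (twoSummandFormEquiv a b ha hb y).1⁆,
        ⁅(twoSummandFormEquiv a b ha hb x).2.1, (twoSummandFormEquiv a b ha hb y).2.1⁆, 0) := by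
  simp only [twoSummandFormEquiv, LinearEquiv.trans_apply, coords323_bracketOf_twoSummandForm,
    LinearEquiv.prodCongr_apply, LinearEquiv.refl_apply, scaledCrossEquivSu2_smul_cross]

def twoSummandFormZeroEquiv (a : ℝ) (ha : a ≠ 0) : (Fin 8 → ℝ) ≃ₗ[ℝ] su 2 × (Fin 5 → ℝ) :=
  coords35.trans <| (scaledCrossEquivSu2 a ha).prodCongr (LinearEquiv.refl ℝ _)

lemma twoSummandFormZeroEquiv_bracketOf (a : ℝ) (ha : a ≠ 0) (x y : Fin 8 → ℝ) :
    twoSummandFormZeroEquiv a ha (bracketOf (twoSummandForm a 0) x y) =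
      (⁅(twoSummandFormZeroEquiv a ha x).1, (twoSummandFormZeroEquiv a ha y).1⁆, 0) := by
  simp only [twoSummandFormZeroEquiv, LinearEquiv.trans_apply,
    coords35_bracketOf_twoSummandForm_zero, LinearEquiv.prodCongr_apply, LinearEquiv.refl_apply,
    scaledCrossEquivSu2_smul_cross]

theorem two_summand_form_bracket_jacobi_adapted_and_iso_general
    (a b : ℝ) (ha : 0 < a) :
    (∀ x y z : Fin 8 → ℝ,
      bracketOf (a • wedge3 0 1 2 + b • wedge3 3 4 5)
          (bracketOf (a • wedge3 0 1 2 + b • wedge3 3 4 5) x y) z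
        + bracketOf (a • wedge3 0 1 2 + b • wedge3 3 4 5)
            (bracketOf (a • wedge3 0 1 2 + b • wedge3 3 4 5) y z) x
        + bracketOf (a • wedge3 0 1 2 + b • wedge3 3 4 5)
            (bracketOf (a • wedge3 0 1 2 + b • wedge3 3 4 5) z x) y = 0)
    ∧ (∀ x y z : Fin 8 → ℝ,
        dot (bracketOf (a • wedge3 0 1 2 + b • wedge3 3 4 5) x y) z
          = - dot y (bracketOf (a • wedge3 0 1 2 + b • wedge3 3 4 5) x z))
    ∧ (0 < b → ∃ f : (Fin 8 → ℝ) ≃ₗ[ℝ] (su 2 × su 2 × (Fin 2 → ℝ)), ∀ x y : Fin 8 → ℝ,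
        f (bracketOf (a • wedge3 0 1 2 + b • wedge3 3 4 5) x y)
          = (⁅(f x).1, (f y).1⁆, ⁅(f x).2.1, (f y).2.1⁆, 0))
    ∧ (b = 0 → ∃ f : (Fin 8 → ℝ) ≃ₗ[ℝ] (su 2 × (Fin 5 → ℝ)), ∀ x y : Fin 8 → ℝ,
        f (bracketOf (a • wedge3 0 1 2 + b • wedge3 3 4 5) x y)
          = (⁅(f x).1, (f y).1⁆, 0)) := by
  refine ⟨bracketOf_twoSummandForm_jacobi a b, dot_bracketOf_twoSummandForm a b, ?_, ?_⟩
  · intro hb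
    exact ⟨twoSummandFormEquiv a b ha.ne' hb.ne', twoSummandFormEquiv_bracketOf a b ha.ne' hb.ne'⟩
  · rintro rfl
    exact ⟨twoSummandFormZeroEquiv a ha.ne', twoSummandFormZeroEquiv_bracketOf a ha.ne'⟩

/-- For real numbers `a ≥ b ≥ 0` with `a² + b² = 1` and `a > 0`, the 3-form
`ρ = a·e^{123} + b·e^{456}` on Euclidean ℝ⁸ has induced bracket satisfying the Jacobi identity,
so `(ℝ⁸, [·,·]_ρ, ⟨·,·⟩)` is an adapted Lie algebra; moreover this Lie algebra is isomorphic to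
`su(2) ⊕ su(2) ⊕ ℝ²` if `b > 0`, and to `su(2) ⊕ ℝ⁵` if `b = 0` (the abelian factors `ℝᵖ`
carrying the zero bracket). -/
theorem two_summand_form_bracket_jacobi_adapted_and_iso
    (a b : ℝ) (hab : b ≤ a) (hb : 0 ≤ b) (hunit : a ^ 2 + b ^ 2 = 1) (ha : 0 < a) :
    (∀ x y z : Fin 8 → ℝ,
      bracketOf (a • wedge3 0 1 2 + b • wedge3 3 4 5)
          (bracketOf (a • wedge3 0 1 2 + b • wedge3 3 4 5) x y) z
        + bracketOf (a • wedge3 0 1 2 + b • wedge3 3 4 5)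
            (bracketOf (a • wedge3 0 1 2 + b • wedge3 3 4 5) y z) x
        + bracketOf (a • wedge3 0 1 2 + b • wedge3 3 4 5)
            (bracketOf (a • wedge3 0 1 2 + b • wedge3 3 4 5) z x) y = 0)
    ∧ (∀ x y z : Fin 8 → ℝ,
        dot (bracketOf (a • wedge3 0 1 2 + b • wedge3 3 4 5) x y) z
          = - dot y (bracketOf (a • wedge3 0 1 2 + b • wedge3 3 4 5) x z))
    ∧ (0 < b → ∃ f : (Fin 8 → ℝ) ≃ₗ[ℝ] (su 2 × su 2 × (Fin 2 → ℝ)), ∀ x y : Fin 8 → ℝ,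
        f (bracketOf (a • wedge3 0 1 2 + b • wedge3 3 4 5) x y)
          = (⁅(f x).1, (f y).1⁆, ⁅(f x).2.1, (f y).2.1⁆, 0))
    ∧ (b = 0 → ∃ f : (Fin 8 → ℝ) ≃ₗ[ℝ] (su 2 × (Fin 5 → ℝ)), ∀ x y : Fin 8 → ℝ,
        f (bracketOf (a • wedge3 0 1 2 + b • wedge3 3 4 5) x y)
          = (⁅(f x).1, (f y).1⁆, 0)) :=
  two_summand_form_bracket_jacobi_adapted_and_iso_general a b ha
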